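/- arXiv:2110.05271 — 2 statements merged into one kernel-verified Lean document; each statement's English description precedes it below -/
import Mathlib

section
/- Let γ : [t₀, t₁] → [0, ∞) be continuous, left-differentiable on (t₀, t₁], and suppose there exist b ∈ ℝ and a continuous function g : [t₀, t₁] → [0, ∞) such that the left derivative of γ at every t satisfies (d⁻γ/dt)(t) ≤ b·γ(t) + g(t). Then for every t ∈ [t₀, t₁], γ(t) ≤ e^{b(t - t₀)}·γ(t₀) + ∫_{t₀}^{t} e^{b(t-s)} g(s) ds. -/
/-! Multiplying by the integrating factor `exp (-b t)` turns the differential inequality into a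
function `exp (-b t) γ t - ∫_{t₀}^t exp (-b s) g s` with nonpositive left derivative. A function
with nonpositive left derivatives does not increase: reversing time makes them right derivatives,
where the fundamental theorem of calculus for one-sided derivatives applies. -/

open Set Real intervalIntegral

theorem le_of_hasDerivWithinAt_Iic_nonpos {G G' : ℝ → ℝ} {a c : ℝ} (hac : a ≤ c)
    (hG : ContinuousOn G (Icc a c))
    (hG' : ∀ x ∈ Ioc a c, HasDerivWithinAt G (G' x) (Iic x) x)
    (hG'_nonpos : ∀ x ∈ Ioc a c, G' x ≤ 0) : G c ≤ G a := by
  have hneg_mem : ∀ s ∈ Ico (-c) (-a), -s ∈ Ioc a c := fun s hs =>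
    ⟨by linarith [hs.2], by linarith [hs.1]⟩
  have hrev_cont : ContinuousOn (fun s => -G (-s)) (Icc (-c) (-a)) :=
    (hG.comp continuousOn_neg fun s hs => ⟨by linarith [hs.2], by linarith [hs.1]⟩).neg
  have hrev_deriv : ∀ s ∈ Ico (-c) (-a),
      HasDerivWithinAt (fun s => -G (-s)) (G' (-s)) (Ioi s) s := by
    intro s hs
    have hmaps : MapsTo Neg.neg (Ioi s) (Iio (-s)) := fun _ hy => mem_Iio.2 (neg_lt_neg hy)
    exact ((hG' _ (hneg_mem s hs)).Iio_of_Iic.comp s (hasDerivWithinAt_neg s (Ioi s)) hmaps).neg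
      |>.congr_deriv (by ring)
  have := sub_le_integral_of_hasDeriv_right_of_le_Ico (neg_le_neg hac) hrev_cont hrev_deriv
    MeasureTheory.integrableOn_zero fun s hs => hG'_nonpos _ (hneg_mem s hs)
  simp only [neg_neg, integral_zero] at this
  linarith

theorem hasDerivWithinAt_Iic_integral {f : ℝ → ℝ} {a c x : ℝ} (hf : ContinuousOn f (Icc a c))
    (hx : x ∈ Ioc a c) : HasDerivWithinAt (fun y => ∫ s in a..y, f s) (f x) (Iic x) x := by
  have hsub : Ioc a x ⊆ Icc a c := Ioc_subset_Icc_self.trans (Icc_subset_Icc_right hx.2)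
  have hnhds : Ioc a x ∈ nhdsWithin x (Iic x) := Ioc_mem_nhdsLE hx.1
  refine integral_hasDerivWithinAt_right (t := Iic x) ?_ ⟨Ioc a x, hnhds, ?_⟩ ?_
  · exact (hf.mono (Icc_subset_Icc_right hx.2)).intervalIntegrable_of_Icc hx.1.le
  · exact (hf.mono hsub).aestronglyMeasurable measurableSet_Ioc
  · exact ((hf x ⟨hx.1.le, hx.2⟩).mono hsub).mono_of_mem_nhdsWithin hnhds

theorem le_exp_mul_add_integral_of_hasDerivWithinAt_Iic {γ γ' g : ℝ → ℝ} {a c b : ℝ}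
    (hac : a ≤ c) (hγ : ContinuousOn γ (Icc a c)) (hg : ContinuousOn g (Icc a c))
    (hγ' : ∀ x ∈ Ioc a c, HasDerivWithinAt γ (γ' x) (Iic x) x)
    (hle : ∀ x ∈ Ioc a c, γ' x ≤ b * γ x + g x) :
    γ c ≤ exp (b * (c - a)) * γ a + ∫ s in a..c, exp (b * (c - s)) * g s := by
  set f : ℝ → ℝ := fun s => exp (-(b * s)) * g s with hf_def
  have hexp : Continuous fun x => exp (-(b * x)) := continuous_exp.comp (by fun_prop)
  have hf : ContinuousOn f (Icc a c) := hexp.continuousOn.mul hg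
  have hprimitive : ContinuousOn (fun x => ∫ s in a..x, f s) (Icc a c) := by
    simpa [uIcc_of_le hac] using
      continuousOn_primitive_interval (μ := MeasureTheory.volume) (hf.integrableOn_Icc.mono_set
        (uIcc_of_le hac).subset)
  have hderiv : ∀ x ∈ Ioc a c, HasDerivWithinAt (fun x => exp (-(b * x)) * γ x - ∫ s in a..x, f s)
      (exp (-(b * x)) * (γ' x - b * γ x - g x)) (Iic x) x := by
    intro x hx
    have hexp' : HasDerivWithinAt (fun y => exp (-(b * y))) (exp (-(b * x)) * -b) (Iic x) x :=
      ((hasDerivAt_id x).const_mul b).neg.exp.hasDerivWithinAt.congr_deriv (by simp)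
    exact ((hexp'.mul (hγ' x hx)).sub (hasDerivWithinAt_Iic_integral hf hx)).congr_deriv
      (by simp only [hf_def]; ring)
  have hdecr : exp (-(b * c)) * γ c - ∫ s in a..c, f s ≤ exp (-(b * a)) * γ a - 0 := by
    rw [← integral_same (f := f) (a := a)]
    exact le_of_hasDerivWithinAt_Iic_nonpos hac ((hexp.continuousOn.mul hγ).sub hprimitive) hderiv
      fun x hx => mul_nonpos_of_nonneg_of_nonpos (exp_pos _).le (by linarith [hle x hx])
  calc γ c = exp (b * c) * (exp (-(b * c)) * γ c) := by
        rw [← mul_assoc, ← exp_add, add_neg_cancel, exp_zero, one_mul]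
    _ ≤ exp (b * c) * (exp (-(b * a)) * γ a + ∫ s in a..c, f s) := by gcongr; linarith
    _ = exp (b * (c - a)) * γ a + ∫ s in a..c, exp (b * (c - s)) * g s := by
        rw [mul_add, ← integral_const_mul, ← mul_assoc, ← exp_add]
        congr 1
        · ring_nf
        · refine integral_congr fun s _ => ?_
          simp only [hf_def, ← mul_assoc, ← exp_add]
          ring_nf

theorem gronwall_left_derivative_general (t₀ t₁ : ℝ)
    (γ g : ℝ → ℝ) (γ' : ℝ → ℝ) (b : ℝ)
    (hγc : ContinuousOn γ (Icc t₀ t₁))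
    (hgc : ContinuousOn g (Icc t₀ t₁))
    (hγd : ∀ t ∈ Ioc t₀ t₁, HasDerivWithinAt γ (γ' t) (Iic t) t)
    (hineq : ∀ t ∈ Ioc t₀ t₁, γ' t ≤ b * γ t + g t) :
    ∀ t ∈ Icc t₀ t₁,
      γ t ≤ Real.exp (b * (t - t₀)) * γ t₀ + ∫ s in t₀..t, Real.exp (b * (t - s)) * g s := by
  intro t ht
  have hsub : Ioc t₀ t ⊆ Ioc t₀ t₁ := Ioc_subset_Ioc_right ht.2
  exact le_exp_mul_add_integral_of_hasDerivWithinAt_Iic ht.1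
    (hγc.mono (Icc_subset_Icc_right ht.2)) (hgc.mono (Icc_subset_Icc_right ht.2))
    (fun x hx => hγd x (hsub hx)) (fun x hx => hineq x (hsub hx))

theorem gronwall_left_derivative (t₀ t₁ : ℝ) (ht : t₀ ≤ t₁) (h0 : 0 ≤ t₀)
    (γ g : ℝ → ℝ) (γ' : ℝ → ℝ) (b : ℝ)
    (hγc : ContinuousOn γ (Icc t₀ t₁))
    (hγnn : ∀ t ∈ Icc t₀ t₁, 0 ≤ γ t)
    (hgc : ContinuousOn g (Icc t₀ t₁))
    (hgnn : ∀ t ∈ Icc t₀ t₁, 0 ≤ g t)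
    (hγd : ∀ t ∈ Ioc t₀ t₁, HasDerivWithinAt γ (γ' t) (Iic t) t)
    (hineq : ∀ t ∈ Ioc t₀ t₁, γ' t ≤ b * γ t + g t) :
    ∀ t ∈ Icc t₀ t₁,
      γ t ≤ Real.exp (b * (t - t₀)) * γ t₀ + ∫ s in t₀..t, Real.exp (b * (t - s)) * g s :=
  gronwall_left_derivative_general t₀ t₁ γ g γ' b hγc hgc hγd hineq
end

section
/- Let H be a real Hilbert space, n ∈ ℕ, and V : Hⁿ → H a symmetric n-multilinear map such that ⟨V(h, x, …, x), h⟩ ≤ 0 for all h, x ∈ H. Define P(x) := V(x, …, x) and F(x) := P(x) + ζ₂·x for a constant ζ₂ ∈ ℝ. Then ⟨F(x) - F(y), x - y⟩ ≤ ζ₂·‖x - y‖² for all x, y ∈ H. -/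
/-!
Along the segment `t ↦ y + t • (x - y)` the function `φ t = ⟪P (y + t • (x - y)), x - y⟫` has
derivative `n ⟪V (x - y, y + t • (x - y), …), x - y⟫ ≤ 0`, because by symmetry all `n` terms of the
derivative of the diagonal of `V` coincide. Hence `φ 1 ≤ φ 0`, i.e. `⟪P x - P y, x - y⟫ ≤ 0`, and the
linear part contributes exactly `ζ₂ ‖x - y‖²`.
-/

open Function

theorem apply_update_const_eq_of_perm_invariant {ι α β : Type*} [DecidableEq ι]
    (f : (ι → α) → β) (hf : ∀ (σ : Equiv.Perm ι) (m : ι → α), f m = f (m ∘ σ))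
    (c h : α) (i j : ι) :
    f (update (fun _ => c) i h) = f (update (fun _ => c) j h) := by
  have hswap := update_comp_eq_of_injective (fun _ : ι => c) (Equiv.swap i j).injective j h
  rw [Equiv.swap_apply_right] at hswap
  rw [hf (Equiv.swap i j), hswap]
  rfl

namespace ContinuousMultilinearMap

variable {𝕜 ι E F : Type*} [NontriviallyNormedField 𝕜] [Fintype ι] [DecidableEq ι]
  [NormedAddCommGroup E] [NormedSpace 𝕜 E] [NormedAddCommGroup F] [NormedSpace 𝕜 F]
  (f : ContinuousMultilinearMap 𝕜 (fun _ : ι => E) F)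

theorem linearDeriv_const_of_perm_invariant
    (hf : ∀ (σ : Equiv.Perm ι) (m : ι → E), f m = f (m ∘ σ)) (c h : E) (i : ι) :
    f.linearDeriv (fun _ => c) (fun _ => h)
      = (Fintype.card ι : 𝕜) • f (update (fun _ => c) i h) := by
  rw [linearDeriv_apply, Finset.sum_congr rfl fun j _ =>
    apply_update_const_eq_of_perm_invariant f hf c h j i, Finset.sum_const, Finset.card_univ,
    Nat.cast_smul_eq_nsmul]

theorem hasDerivAt_apply_const_line
    (hf : ∀ (σ : Equiv.Perm ι) (m : ι → E), f m = f (m ∘ σ)) (y h : E) (i : ι) (t : 𝕜) :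
    HasDerivAt (fun t : 𝕜 => f (fun _ => y + t • h))
      ((Fintype.card ι : 𝕜) • f (update (fun _ => y + t • h) i h)) t := by
  have hline : HasDerivAt (fun t : 𝕜 => fun _ : ι => y + t • h) (fun _ => h) t := by
    rw [hasDerivAt_pi]
    exact fun _ => by simpa using ((hasDerivAt_id t).smul_const h).const_add y
  rw [← f.linearDeriv_const_of_perm_invariant hf]
  exact (f.hasFDerivAt _).comp_hasDerivAt t hline

theorem inner_sub_apply_const_nonpos {H : Type*} [NormedAddCommGroup H] [InnerProductSpace ℝ H]
    (f : ContinuousMultilinearMap ℝ (fun _ : ι => H) H)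
    (hf : ∀ (σ : Equiv.Perm ι) (m : ι → H), f m = f (m ∘ σ)) (i : ι)
    (hdiss : ∀ h x : H, inner ℝ (f (update (fun _ => x) i h)) h ≤ 0) (x y : H) :
    inner ℝ (f (fun _ => x) - f (fun _ => y)) (x - y) ≤ 0 := by
  set φ : ℝ → ℝ := fun t => inner ℝ (f (fun _ => y + t • (x - y))) (x - y)
  have hφ : ∀ t, HasDerivAt φ
      (Fintype.card ι * inner ℝ (f (update (fun _ => y + t • (x - y)) i (x - y))) (x - y)) t := by
    intro t
    simpa only [inner_zero_right, zero_add, real_inner_smul_left] using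
      (f.hasDerivAt_apply_const_line hf y (x - y) i t).inner ℝ (hasDerivAt_const t (x - y))
  have hanti : φ 1 ≤ φ 0 :=
    antitone_of_deriv_nonpos (fun t => (hφ t).differentiableAt)
      (fun t => (hφ t).deriv ▸ mul_nonpos_of_nonneg_of_nonpos (Nat.cast_nonneg _) (hdiss _ _))
      zero_le_one
  simpa [φ, inner_sub_left] using hanti

end ContinuousMultilinearMap

theorem polynomial_plus_linear_semimonotone_general {H : Type*} [NormedAddCommGroup H]
    [InnerProductSpace ℝ H]
    (n : ℕ) (hn : 0 < n)
    (V : ContinuousMultilinearMap ℝ (fun _ : Fin n => H) H)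
    (hsym : ∀ (σ : Equiv.Perm (Fin n)) (m : Fin n → H), V m = V (m ∘ σ))
    (hdiss : ∀ h x : H,
      (inner ℝ (V (Function.update (fun _ => x) ⟨0, hn⟩ h)) h : ℝ) ≤ 0)
    (ζ₂ : ℝ) :
    ∀ x y : H,
      (inner ℝ ((V (fun _ => x) + ζ₂ • x) - (V (fun _ => y) + ζ₂ • y)) (x - y) : ℝ)
        ≤ ζ₂ * ‖x - y‖ ^ 2 := by
  intro x y
  have hsplit : (V (fun _ => x) + ζ₂ • x) - (V (fun _ => y) + ζ₂ • y)
      = (V (fun _ => x) - V (fun _ => y)) + ζ₂ • (x - y) := by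
    module
  rw [hsplit, inner_add_left, real_inner_smul_left, real_inner_self_eq_norm_sq]
  linarith [V.inner_sub_apply_const_nonpos hsym ⟨0, hn⟩ hdiss x y]

theorem polynomial_plus_linear_semimonotone {H : Type*} [NormedAddCommGroup H]
    [InnerProductSpace ℝ H] [CompleteSpace H]
    (n : ℕ) (hn : 0 < n)
    (V : ContinuousMultilinearMap ℝ (fun _ : Fin n => H) H)
    (hsym : ∀ (σ : Equiv.Perm (Fin n)) (m : Fin n → H), V m = V (m ∘ σ))
    (hdiss : ∀ h x : H,
      (inner ℝ (V (Function.update (fun _ => x) ⟨0, hn⟩ h)) h : ℝ) ≤ 0)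
    (ζ₂ : ℝ) :
    ∀ x y : H,
      (inner ℝ ((V (fun _ => x) + ζ₂ • x) - (V (fun _ => y) + ζ₂ • y)) (x - y) : ℝ)
        ≤ ζ₂ * ‖x - y‖ ^ 2 :=
  polynomial_plus_linear_semimonotone_general n hn V hsym hdiss ζ₂
end
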